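/- Let H be a real Hilbert space, C ⊆ H a nonempty closed convex set, γ > 0, and G : H → H. Let P_C : H → C denote the nearest point projection onto C (i.e. for each z ∈ H, P_C z ∈ C and ‖z − P_C z‖ ≤ ‖z − y‖ for all y ∈ C). Suppose the map T : C → C defined by Tx = P_C(x − γGx) is a (k,θ,L)-enriched almost contraction on C, i.e. k ∈ [0,∞), θ ∈ (0,k+1), L ≥ 0 and ‖k(x−y) + Tx − Ty‖ ≤ θ‖x−y‖ + L‖k(x−y) + Tx − y‖ for all x,y ∈ C. Then there exists λ ∈ (0,1] such that for every x₀ ∈ C the iterative algorithm xₙ₊₁ = (1−λ)xₙ + λP_C(xₙ − γGxₙ) converges strongly to a point x* ∈ C satisfying P_C(x* − γGx*) = x*, that is, to a solution of the variational inequality problem ⟨Gx*, x − x*⟩ ≥ 0 for all x ∈ C. -/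

import Mathlib

open RealInnerProductSpace Filter Topology Set Function

/-!
Averaging with weight `λ = 1/(k+1)` turns the enriched almost contraction `T` into the
Krasnoselskij map `f = (1 - λ) id + λ T`, which is an almost contraction in Berinde's sense with
constant `θ/(k+1) < 1`, because `f x - f y = λ (k (x - y) + T x - T y)` and
`k (x - y) + T x - y = (k + 1) (f x - y)`. Taking `y = f x` makes the last term vanish, so Picard
iterates of `f` shrink geometrically and converge; taking `y` the limit shows it is a fixed point
of `f`, hence of `T`. A fixed point of `P(x - γGx)` solves the variational inequality by the
obtuse-angle characterization of the projection onto a convex set.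
-/

def AlmostContractionOn {α : Type*} [PseudoMetricSpace α] (f : α → α) (s : Set α) (c L : ℝ) :
    Prop :=
  ∀ x ∈ s, ∀ y ∈ s, dist (f x) (f y) ≤ c * dist x y + L * dist (f x) y

def EnrichedAlmostContractionOn {E : Type*} [SeminormedAddCommGroup E] [NormedSpace ℝ E]
    (T : E → E) (s : Set E) (k θ L : ℝ) : Prop :=
  ∀ x ∈ s, ∀ y ∈ s, ‖k • (x - y) + T x - T y‖ ≤ θ * ‖x - y‖ + L * ‖k • (x - y) + T x - y‖

def krasnoselskijMap {E : Type*} [AddCommGroup E] [Module ℝ E] (lam : ℝ) (T : E → E) (x : E) :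
    E :=
  (1 - lam) • x + lam • T x

namespace AlmostContractionOn

variable {α : Type*} [PseudoMetricSpace α] {f : α → α} {s : Set α} {c L : ℝ}

theorem dist_iterate_succ_le (hf : AlmostContractionOn f s c L) (hfs : MapsTo f s s)
    (hc : 0 ≤ c) {x : α} (hx : x ∈ s) (n : ℕ) :
    dist (f^[n] x) (f^[n + 1] x) ≤ dist x (f x) * c ^ n := by
  induction n with
  | zero => simp
  | succ n ih =>
    have hmem : f^[n] x ∈ s := hfs.iterate n hx
    have hstep := hf _ hmem _ (hfs hmem)
    rw [dist_self, mul_zero, add_zero] at hstep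
    calc dist (f^[n + 1] x) (f^[n + 2] x)
        = dist (f (f^[n] x)) (f (f (f^[n] x))) := by
          simp only [iterate_succ_apply']
      _ ≤ c * dist (f^[n] x) (f (f^[n] x)) := hstep
      _ ≤ c * (dist x (f x) * c ^ n) := by
          rw [← iterate_succ_apply' f n x]
          exact mul_le_mul_of_nonneg_left ih hc
      _ = dist x (f x) * c ^ (n + 1) := by ring

end AlmostContractionOn

theorem AlmostContractionOn.exists_isFixedPt_tendsto_iterate {α : Type*} [MetricSpace α]
    {f : α → α} {s : Set α} {c L : ℝ} (hf : AlmostContractionOn f s c L)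
    (hs : IsComplete s) (hfs : MapsTo f s s) (hc₀ : 0 ≤ c) (hc₁ : c < 1) {x : α} (hx : x ∈ s) :
    ∃ z ∈ s, IsFixedPt f z ∧ Tendsto (fun n => f^[n] x) atTop (𝓝 z) := by
  have hcauchy : CauchySeq fun n => f^[n] x :=
    cauchySeq_of_le_geometric c _ hc₁ (hf.dist_iterate_succ_le hfs hc₀ hx)
  obtain ⟨z, hz, hlim⟩ :=
    cauchySeq_tendsto_of_isComplete hs (fun n => hfs.iterate n hx) hcauchy
  have hlim_succ : Tendsto (fun n => f (f^[n] x)) atTop (𝓝 z) := by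
    simpa only [comp_def, iterate_succ_apply'] using hlim.comp (tendsto_add_atTop_nat 1)
  have hbound : Tendsto (fun n => c * dist (f^[n] x) z + L * dist (f (f^[n] x)) z)
      atTop (𝓝 0) := by
    simpa using ((tendsto_iff_dist_tendsto_zero.1 hlim).const_mul c).add
      ((tendsto_iff_dist_tendsto_zero.1 hlim_succ).const_mul L)
  have hlim_fz : Tendsto (fun n => f (f^[n] x)) atTop (𝓝 (f z)) :=
    tendsto_iff_dist_tendsto_zero.2 <| squeeze_zero (fun _ => dist_nonneg)
      (fun n => hf _ (hfs.iterate n hx) _ hz) hbound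
  exact ⟨z, hz, tendsto_nhds_unique hlim_fz hlim_succ, hlim⟩

section Krasnoselskij

variable {E : Type*} [SeminormedAddCommGroup E] [NormedSpace ℝ E] {T : E → E} {s : Set E}

theorem Convex.mapsTo_krasnoselskijMap (hs : Convex ℝ s) (hT : MapsTo T s s) {lam : ℝ}
    (hlam₀ : 0 ≤ lam) (hlam₁ : lam ≤ 1) : MapsTo (krasnoselskijMap lam T) s s :=
  fun _ hx => hs hx (hT hx) (sub_nonneg.2 hlam₁) hlam₀ (sub_add_cancel 1 lam)

theorem isFixedPt_krasnoselskijMap_iff {lam : ℝ} (hlam : lam ≠ 0) {x : E} :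
    IsFixedPt (krasnoselskijMap lam T) x ↔ IsFixedPt T x := by
  have hdiff : krasnoselskijMap lam T x - x = lam • (T x - x) := by
    simp only [krasnoselskijMap]; module
  rw [IsFixedPt, IsFixedPt, ← sub_eq_zero, hdiff, smul_eq_zero, sub_eq_zero]
  exact or_iff_right hlam

theorem EnrichedAlmostContractionOn.almostContractionOn_krasnoselskijMap {k θ L : ℝ}
    (hT : EnrichedAlmostContractionOn T s k θ L) (hk : 0 < k + 1) :
    AlmostContractionOn (krasnoselskijMap (k + 1)⁻¹ T) s (θ / (k + 1)) L := by
  intro x hx y hy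
  set f := krasnoselskijMap (k + 1)⁻¹ T
  have hfxy : f x - f y = (k + 1)⁻¹ • (k • (x - y) + T x - T y) := by
    simp only [f, krasnoselskijMap]
    match_scalars <;> field_simp <;> ring
  have hfx : k • (x - y) + T x - y = (k + 1) • (f x - y) := by
    simp only [f, krasnoselskijMap]
    match_scalars <;> field_simp <;> ring
  rw [dist_eq_norm, dist_eq_norm, dist_eq_norm, hfxy, norm_smul,
    Real.norm_of_nonneg (inv_pos.2 hk).le]
  calc (k + 1)⁻¹ * ‖k • (x - y) + T x - T y‖
      ≤ (k + 1)⁻¹ * (θ * ‖x - y‖ + L * ‖k • (x - y) + T x - y‖) := by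
        gcongr
        exact hT x hx y hy
    _ = θ / (k + 1) * ‖x - y‖ + L * ‖f x - y‖ := by
        rw [hfx, norm_smul, Real.norm_of_nonneg hk.le]
        field_simp

end Krasnoselskij

section Projection

variable {H : Type*} [NormedAddCommGroup H] [InnerProductSpace ℝ H] {C : Set H}

theorem real_inner_sub_le_zero_of_forall_norm_sub_le (hC : Convex ℝ C) {u v : H} (hv : v ∈ C)
    (hmin : ∀ w ∈ C, ‖u - v‖ ≤ ‖u - w‖) : ∀ w ∈ C, ⟪u - v, w - v⟫ ≤ 0 := by
  have : Nonempty C := ⟨⟨v, hv⟩⟩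
  refine (norm_eq_iInf_iff_real_inner_le_zero hC hv).1 (le_antisymm ?_ ?_)
  · exact le_ciInf fun w => hmin w w.2
  · exact ciInf_le (f := fun w : C => ‖u - w‖)
      ⟨0, forall_mem_range.2 fun w => norm_nonneg _⟩ ⟨v, hv⟩

theorem real_inner_nonneg_of_projection_fixed (hC : Convex ℝ C) {P : H → H}
    (hPmem : ∀ z, P z ∈ C) (hPproj : ∀ z, ∀ y ∈ C, ‖z - P z‖ ≤ ‖z - y‖) {γ : ℝ} (hγ : 0 < γ)
    {G : H → H} {x : H} (hx : P (x - γ • G x) = x) : ∀ y ∈ C, 0 ≤ ⟪G x, y - x⟫ := by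
  intro y hy
  have hobtuse := real_inner_sub_le_zero_of_forall_norm_sub_le hC (hx ▸ hPmem _)
    (fun w hw => hx ▸ hPproj (x - γ • G x) w hw) y hy
  rw [sub_sub_cancel_left, inner_neg_left, real_inner_smul_left] at hobtuse
  nlinarith

end Projection

theorem krasnoselskij_projection_converges_to_VIP_solution_general
    {H : Type*} [NormedAddCommGroup H] [InnerProductSpace ℝ H] [CompleteSpace H]
    (C : Set H) (hCc : IsClosed C) (hCv : Convex ℝ C)
    (γ : ℝ) (hγ : 0 < γ) (G : H → H)
    (P : H → H) (hPmem : ∀ z : H, P z ∈ C)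
    (hPproj : ∀ z : H, ∀ y ∈ C, ‖z - P z‖ ≤ ‖z - y‖)
    (k θ L : ℝ) (hk : 0 ≤ k) (hθ : θ ∈ Set.Ioo 0 (k + 1))
    (hT : ∀ x ∈ C, ∀ y ∈ C,
      ‖k • (x - y) + P (x - γ • G x) - P (y - γ • G y)‖ ≤
        θ * ‖x - y‖ + L * ‖k • (x - y) + P (x - γ • G x) - y‖) :
    ∃ lam ∈ Set.Ioc (0 : ℝ) 1,
      ∀ x₀ ∈ C, ∃ xs ∈ C,
        P (xs - γ • G xs) = xs ∧
        (∀ x ∈ C, 0 ≤ ⟪G xs, x - xs⟫) ∧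
        Filter.Tendsto
          (fun n => (fun z => (1 - lam) • z + lam • P (z - γ • G z))^[n] x₀)
          Filter.atTop (nhds xs) := by
  obtain ⟨hθ₀, hθk⟩ := hθ
  have hk₁ : 0 < k + 1 := by linarith
  set T : H → H := fun z => P (z - γ • G z)
  have hlam₀ : 0 < (k + 1)⁻¹ := inv_pos.2 hk₁
  have hlam₁ : (k + 1)⁻¹ ≤ 1 := inv_le_one_of_one_le₀ (by linarith)
  have hf : AlmostContractionOn (krasnoselskijMap (k + 1)⁻¹ T) C (θ / (k + 1)) L :=
    EnrichedAlmostContractionOn.almostContractionOn_krasnoselskijMap (T := T) hT hk₁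
  have hfC : MapsTo (krasnoselskijMap (k + 1)⁻¹ T) C C :=
    hCv.mapsTo_krasnoselskijMap (fun z _ => hPmem _) hlam₀.le hlam₁
  refine ⟨(k + 1)⁻¹, ⟨hlam₀, hlam₁⟩, fun x₀ hx₀ => ?_⟩
  obtain ⟨xs, hxs, hfix, hlim⟩ := hf.exists_isFixedPt_tendsto_iterate hCc.isComplete hfC
    (div_nonneg hθ₀.le hk₁.le) ((div_lt_one hk₁).2 hθk) hx₀
  have hTfix : T xs = xs := (isFixedPt_krasnoselskijMap_iff hlam₀.ne').1 hfix
  exact ⟨xs, hxs, hTfix,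
    real_inner_nonneg_of_projection_fixed hCv hPmem hPproj hγ hTfix, hlim⟩

/-- **Theorem (application to variational inequalities).** Let `H` be a real
Hilbert space, `C ⊆ H` nonempty closed convex, `γ > 0`, `G : H → H`, and let
`P` be the nearest point projection onto `C`. If `T x = P(x − γGx)` is a
`(k,θ,L)`-enriched almost contraction on `C`, then there exists `λ ∈ (0,1]`
such that for every `x₀ ∈ C` the Krasnoselskij projection algorithm
`xₙ₊₁ = (1−λ)xₙ + λP(xₙ − γGxₙ)` converges strongly to a point `x* ∈ C` with
`P(x* − γGx*) = x*`, i.e. a solution of the variational inequality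
`⟨Gx*, x − x*⟩ ≥ 0` for all `x ∈ C`. -/
theorem krasnoselskij_projection_converges_to_VIP_solution
    {H : Type*} [NormedAddCommGroup H] [InnerProductSpace ℝ H] [CompleteSpace H]
    (C : Set H) (hC : C.Nonempty) (hCc : IsClosed C) (hCv : Convex ℝ C)
    (γ : ℝ) (hγ : 0 < γ) (G : H → H)
    (P : H → H) (hPmem : ∀ z : H, P z ∈ C)
    (hPproj : ∀ z : H, ∀ y ∈ C, ‖z - P z‖ ≤ ‖z - y‖)
    (k θ L : ℝ) (hk : 0 ≤ k) (hθ : θ ∈ Set.Ioo 0 (k + 1)) (hL : 0 ≤ L)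
    (hT : ∀ x ∈ C, ∀ y ∈ C,
      ‖k • (x - y) + P (x - γ • G x) - P (y - γ • G y)‖ ≤
        θ * ‖x - y‖ + L * ‖k • (x - y) + P (x - γ • G x) - y‖) :
    ∃ lam ∈ Set.Ioc (0 : ℝ) 1,
      ∀ x₀ ∈ C, ∃ xs ∈ C,
        P (xs - γ • G xs) = xs ∧
        (∀ x ∈ C, 0 ≤ ⟪G xs, x - xs⟫) ∧
        Filter.Tendsto
          (fun n => (fun z => (1 - lam) • z + lam • P (z - γ • G z))^[n] x₀)
          Filter.atTop (nhds xs) :=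
  krasnoselskij_projection_converges_to_VIP_solution_general C hCc hCv γ hγ G P hPmem hPproj k θ L
    hk hθ hT
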